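/- arXiv:2510.14228 — 3 statements merged into one kernel-verified Lean document; each statement's English description precedes it below -/
import Mathlib

section
/- The vector field F₁ : ℝ² → ℝ², F₁(z₂, w₀) = (2z₂ − 3z₂w₀, −(1/6)z₂ + w₀ − w₀²), vanishes at a point (z₂, w₀) if and only if (z₂, w₀) ∈ {(0,0), (0,1), (4/3, 2/3)}. That is, the order n = 1 STV ODE has exactly the three rest points U = (0,0), M₂ = (0,1) and SM₂ = (4/3, 2/3). -/
/-- The vector field of the order `n = 1` STV ODE. -/
noncomputable def F1 (p : ℝ × ℝ) : ℝ × ℝ :=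
  (2 * p.1 - 3 * p.1 * p.2, -(1 / 6) * p.1 + p.2 - p.2 ^ 2)

theorem F1_restPoints (p : ℝ × ℝ) :
    F1 p = 0 ↔ p = (0, 0) ∨ p = (0, 1) ∨ p = (4 / 3, 2 / 3) := by
  obtain ⟨x, y⟩ := p
  simp only [F1, Prod.mk.injEq, Prod.ext_iff, Prod.mk_eq_zero, Prod.fst_zero, Prod.snd_zero]
  constructor
  · rintro ⟨h1, h2⟩
    have hx : x * (2 - 3 * y) = 0 := by linarith
    rcases mul_eq_zero.1 hx with hx0 | hy
    · subst hx0
      have : y * (1 - y) = 0 := by nlinarith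
      rcases mul_eq_zero.1 this with h | h
      · exact Or.inl ⟨rfl, h⟩
      · exact Or.inr (Or.inl ⟨rfl, by linarith⟩)
    · have hy' : y = 2 / 3 := by linarith
      subst hy'
      right; right
      constructor
      · nlinarith
      · rfl
  · rintro (⟨hx, hy⟩ | ⟨hx, hy⟩ | ⟨hx, hy⟩) <;> subst hx <;> subst hy <;> norm_num
end

section
/- There exists a continuously differentiable map u : ℝ → ℝ² such that u′(τ) = F₁(u(τ)) for all τ ∈ ℝ, lim_{τ→−∞} u(τ) = (4/3, 2/3) = SM₂, lim_{τ→+∞} u(τ) = (0, 1) = M₂, and u(τ) ∉ {(4/3, 2/3), (0, 1)} for every τ. That is, the order n = 1 STV ODE possesses a heteroclinic orbit connecting the critical Friedmann rest point SM₂ to the Minkowski rest point M₂ (the underdense branch of the unstable manifold of SM₂, realized by the k < 0 Friedmann spacetimes). -/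
open Filter

/-!
The orbit is the family of `k < 0` dust Friedmann spacetimes. In terms of the development
angle `η > 0`, with `t = sinh η - η` and scale factor `∝ cosh η - 1`, the self-similar variables
are `z₂ = 6 (sinh η - η)² / (cosh η - 1)³` and `w₀ = (sinh η - η) sinh η / (cosh η - 1)²`,
and `τ = log t`. Along `η` this curve solves the ODE after the time change
`dη/dτ = (sinh η - η) / (cosh η - 1)`; the verification only uses `sinh² = cosh² - 1`.
As `τ → -∞` we have `η → 0⁺`, and `sinh η - η ~ η³/6`, `cosh η - 1 ~ η²/2`, `sinh η ~ η`
give the limit `SM₂`; as `τ → ∞` we have `η → ∞`, and all three are `~ exp η / 2`,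
which gives the limit `M₂`.
-/

open Asymptotics Real Topology

theorem isEquivalent_nhdsGT_of_hasDerivAt {f g f' g' : ℝ → ℝ} {a : ℝ}
    (hf : ∀ x, HasDerivAt f (f' x) x) (hg : ∀ x, HasDerivAt g (g' x) x)
    (hfa : f a = 0) (hga : g a = 0) (hg' : ∀ᶠ x in 𝓝[>] a, g' x ≠ 0)
    (h : f' ~[𝓝[>] a] g') : f ~[𝓝[>] a] g := by
  have tendsto_zero {φ φ' : ℝ → ℝ} (hφ : ∀ x, HasDerivAt φ (φ' x) x) (hφa : φ a = 0) :
      Tendsto φ (𝓝[>] a) (𝓝 0) :=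
    hφa ▸ (hφ a).continuousAt.tendsto.mono_left nhdsWithin_le_nhds
  exact isEquivalent_of_tendsto_one <| HasDerivAt.lhopital_zero_nhdsGT
    (.of_forall hf) (.of_forall hg) hg' (tendsto_zero hf hfa) (tendsto_zero hg hga)
    ((isEquivalent_iff_tendsto_one hg').mp h)

namespace Real

theorem sinh_isEquivalent_nhdsGT_zero : sinh ~[𝓝[>] 0] id := by
  have hcosh : cosh ~[𝓝[>] 0] fun _ => 1 :=
    (isEquivalent_const_iff_tendsto one_ne_zero).mpr <| by
      simpa using continuous_cosh.continuousAt.tendsto.mono_left (nhdsWithin_le_nhds (a := 0))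
  exact isEquivalent_nhdsGT_of_hasDerivAt hasDerivAt_sinh hasDerivAt_id' sinh_zero rfl
    (.of_forall fun _ => one_ne_zero) hcosh

theorem cosh_sub_one_isEquivalent_nhdsGT_zero :
    (fun x => cosh x - 1) ~[𝓝[>] 0] fun x => x ^ 2 / 2 := by
  refine isEquivalent_nhdsGT_of_hasDerivAt (fun x => (hasDerivAt_cosh x).sub_const 1)
    (fun x => ?_) (by simp) (by simp) ?_ sinh_isEquivalent_nhdsGT_zero
  · simpa using (hasDerivAt_pow 2 x).div_const 2
  · filter_upwards [self_mem_nhdsWithin] with x (hx : 0 < x)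
    exact hx.ne'

theorem sinh_sub_id_isEquivalent_nhdsGT_zero :
    (fun x => sinh x - x) ~[𝓝[>] 0] fun x => x ^ 3 / 6 := by
  refine isEquivalent_nhdsGT_of_hasDerivAt (fun x => (hasDerivAt_sinh x).sub (hasDerivAt_id x))
    (fun x => ?_) (by simp) (by simp) ?_ cosh_sub_one_isEquivalent_nhdsGT_zero
  · exact ((hasDerivAt_pow 3 x).div_const 6).congr_deriv (by norm_num; ring)
  · filter_upwards [self_mem_nhdsWithin] with x (hx : 0 < x)
    positivity

theorem isLittleO_half_exp_of_isBigO_one {f : ℝ → ℝ} (hf : f =O[atTop] fun _ => (1 : ℝ)) :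
    f =o[atTop] fun x => exp x / 2 :=
  hf.trans_isLittleO <| (isLittleO_one_left_iff ℝ).mpr <| tendsto_abs_atTop_atTop.comp <|
    tendsto_exp_atTop.atTop_div_const two_pos

theorem sinh_isEquivalent_atTop : sinh ~[atTop] fun x => exp x / 2 := by
  have h : (fun x => exp (-x) / 2) =o[atTop] fun x => exp x / 2 :=
    isLittleO_half_exp_of_isBigO_one <|
      (tendsto_exp_neg_atTop_nhds_zero.div_const 2).isBigO_one ℝ
  refine (IsEquivalent.refl.sub_isLittleO h).congr_left (.of_eq ?_)
  ext x; simp [sinh_eq, sub_div]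

theorem cosh_sub_one_isEquivalent_atTop :
    (fun x => cosh x - 1) ~[atTop] fun x => exp x / 2 := by
  have h : (fun x => exp (-x) / 2 - 1) =o[atTop] fun x => exp x / 2 :=
    isLittleO_half_exp_of_isBigO_one <|
      ((tendsto_exp_neg_atTop_nhds_zero.div_const 2).sub_const 1).isBigO_one ℝ
  refine (IsEquivalent.refl.add_isLittleO h).congr_left (.of_eq ?_)
  ext x; simp only [Pi.add_apply, cosh_eq]; ring

theorem sinh_sub_id_isEquivalent_atTop :
    (fun x => sinh x - x) ~[atTop] fun x => exp x / 2 := by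
  have h : (fun x : ℝ => x) =o[atTop] fun x => exp x / 2 := by
    simpa [div_eq_inv_mul] using
      (isLittleO_pow_exp_atTop (n := 1)).const_mul_right' (c := 2⁻¹) (by norm_num)
  exact sinh_isEquivalent_atTop.sub_isLittleO h


theorem sinh_sub_self_ne_zero {η : ℝ} (hη : η ≠ 0) : sinh η - η ≠ 0 := by
  simpa using sinh_sub_id_strictMono.injective.ne hη

theorem cosh_sub_one_pos {η : ℝ} (hη : η ≠ 0) : 0 < cosh η - 1 :=
  sub_pos.mpr (one_lt_cosh.mpr hη)

theorem tendsto_sinh_sub_id_atTop : Tendsto (fun x => sinh x - x) atTop atTop :=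
  sinh_sub_id_isEquivalent_atTop.symm.tendsto_atTop (tendsto_exp_atTop.atTop_div_const two_pos)

theorem tendsto_sinh_sub_id_atBot : Tendsto (fun x => sinh x - x) atBot atBot := by
  have h := tendsto_neg_atTop_atBot.comp (tendsto_sinh_sub_id_atTop.comp tendsto_neg_atBot_atTop)
  refine h.congr fun x => ?_
  simp only [Function.comp, sinh_neg]; ring

end Real

noncomputable def friedmannOrbit (η : ℝ) : ℝ × ℝ :=
  (6 * (sinh η - η) ^ 2 / (cosh η - 1) ^ 3, (sinh η - η) * sinh η / (cosh η - 1) ^ 2)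

section

variable {l : Filter ℝ} {p s c : ℝ → ℝ}

theorem friedmannOrbit_fst_isEquivalent (hP : (fun η => sinh η - η) ~[l] p)
    (hC : (fun η => cosh η - 1) ~[l] c) :
    (fun η => (friedmannOrbit η).1) ~[l] fun η => 6 * p η ^ 2 / c η ^ 3 :=
  (IsEquivalent.refl.mul (hP.pow 2)).div (hC.pow 3)

theorem friedmannOrbit_snd_isEquivalent (hP : (fun η => sinh η - η) ~[l] p)
    (hS : sinh ~[l] s) (hC : (fun η => cosh η - 1) ~[l] c) :
    (fun η => (friedmannOrbit η).2) ~[l] fun η => p η * s η / c η ^ 2 :=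
  (hP.mul hS).div (hC.pow 2)

end

theorem tendsto_friedmannOrbit_nhdsGT_zero :
    Tendsto friedmannOrbit (𝓝[>] 0) (𝓝 (4 / 3, 2 / 3)) := by
  have hne : ∀ᶠ η in 𝓝[>] (0 : ℝ), η ≠ 0 := eventually_mem_nhdsWithin.mono fun _ h => ne_of_gt h
  refine .prodMk_nhds ?_ ?_
  · refine (friedmannOrbit_fst_isEquivalent sinh_sub_id_isEquivalent_nhdsGT_zero
      cosh_sub_one_isEquivalent_nhdsGT_zero).symm.tendsto_nhds (tendsto_const_nhds.congr' ?_)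
    filter_upwards [hne] with η hη
    field_simp; ring
  · refine (friedmannOrbit_snd_isEquivalent sinh_sub_id_isEquivalent_nhdsGT_zero
      sinh_isEquivalent_nhdsGT_zero cosh_sub_one_isEquivalent_nhdsGT_zero).symm.tendsto_nhds
      (tendsto_const_nhds.congr' ?_)
    filter_upwards [hne] with η hη
    simp only [id]
    field_simp; ring

theorem tendsto_friedmannOrbit_atTop : Tendsto friedmannOrbit atTop (𝓝 (0, 1)) := by
  refine .prodMk_nhds ?_ ?_
  · refine (friedmannOrbit_fst_isEquivalent sinh_sub_id_isEquivalent_atTop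
      cosh_sub_one_isEquivalent_atTop).symm.tendsto_nhds ?_
    have h := (tendsto_const_nhds (x := (6 : ℝ))).div_atTop
      (tendsto_exp_atTop.atTop_div_const two_pos)
    refine h.congr fun η => ?_
    field_simp
  · refine (friedmannOrbit_snd_isEquivalent sinh_sub_id_isEquivalent_atTop
      sinh_isEquivalent_atTop cosh_sub_one_isEquivalent_atTop).symm.tendsto_nhds
      (tendsto_const_nhds.congr fun η => ?_)
    field_simp

theorem hasDerivAt_friedmannOrbit {η : ℝ} (hη : η ≠ 0) :
    HasDerivAt friedmannOrbit (((cosh η - 1) / (sinh η - η)) • F1 (friedmannOrbit η)) η := by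
  have hP := sinh_sub_self_ne_zero hη
  have hC := (cosh_sub_one_pos hη).ne'
  have dP : HasDerivAt (fun x => sinh x - x) (cosh η - 1) η :=
    (hasDerivAt_sinh η).sub (hasDerivAt_id η)
  have dC : HasDerivAt (fun x => cosh x - 1) (sinh η) η := (hasDerivAt_cosh η).sub_const 1
  refine (((dP.fun_pow 2).const_mul 6).div (dC.fun_pow 3) (pow_ne_zero _ hC)).prodMk
    ((dP.fun_mul (hasDerivAt_sinh η)).div (dC.fun_pow 2) (pow_ne_zero _ hC)) |>.congr_deriv ?_
  have hsq := sinh_sq η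
  simp only [friedmannOrbit, F1, Prod.smul_mk, smul_eq_mul, Prod.mk.injEq]
  constructor
  · field_simp; ring
  · field_simp; linear_combination (cosh η - 1) * (η - sinh η) * hsq

noncomputable def sinhSubIdOrderIso : ℝ ≃o ℝ :=
  sinh_sub_id_strictMono.orderIsoOfSurjective _ <|
    (continuous_sinh.sub continuous_id).surjective tendsto_sinh_sub_id_atTop
      tendsto_sinh_sub_id_atBot

noncomputable def developmentAngle (τ : ℝ) : ℝ := sinhSubIdOrderIso.symm (exp τ)

theorem sinh_developmentAngle_sub (τ : ℝ) :
    sinh (developmentAngle τ) - developmentAngle τ = exp τ :=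
  sinhSubIdOrderIso.apply_symm_apply _

theorem sinhSubIdOrderIso_symm_zero : sinhSubIdOrderIso.symm 0 = 0 :=
  sinhSubIdOrderIso.symm_apply_eq.mpr (by simp [sinhSubIdOrderIso])

theorem developmentAngle_pos (τ : ℝ) : 0 < developmentAngle τ := by
  have h := sinhSubIdOrderIso.symm.strictMono (exp_pos τ)
  rwa [sinhSubIdOrderIso_symm_zero] at h

theorem hasDerivAt_developmentAngle (τ : ℝ) :
    HasDerivAt developmentAngle
      ((sinh (developmentAngle τ) - developmentAngle τ) / (cosh (developmentAngle τ) - 1)) τ := by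
  have hinv : HasDerivAt sinhSubIdOrderIso.symm (cosh (developmentAngle τ) - 1)⁻¹ (exp τ) :=
    HasDerivAt.of_local_left_inverse sinhSubIdOrderIso.symm.continuous.continuousAt
      ((hasDerivAt_sinh _).sub (hasDerivAt_id _))
      (cosh_sub_one_pos (developmentAngle_pos τ).ne').ne'
      (.of_forall sinhSubIdOrderIso.apply_symm_apply)
  refine (hinv.comp τ (hasDerivAt_exp τ)).congr_deriv ?_
  rw [sinh_developmentAngle_sub]; ring

theorem tendsto_developmentAngle_atTop : Tendsto developmentAngle atTop atTop :=
  sinhSubIdOrderIso.symm.tendsto_atTop.comp tendsto_exp_atTop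

theorem tendsto_developmentAngle_atBot : Tendsto developmentAngle atBot (𝓝[>] 0) := by
  refine tendsto_nhdsWithin_iff.mpr ⟨?_, .of_forall developmentAngle_pos⟩
  have h := sinhSubIdOrderIso.symm.continuous.tendsto 0
  rw [sinhSubIdOrderIso_symm_zero] at h
  exact h.comp tendsto_exp_atBot

theorem hasDerivAt_friedmannOrbit_comp_developmentAngle (τ : ℝ) :
    HasDerivAt (friedmannOrbit ∘ developmentAngle)
      (F1 (friedmannOrbit (developmentAngle τ))) τ := by
  have hη := (developmentAngle_pos τ).ne'
  refine ((hasDerivAt_friedmannOrbit hη).scomp τ (hasDerivAt_developmentAngle τ)).congr_deriv ?_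
  rw [smul_smul, div_mul_div_cancel₀ (cosh_sub_one_pos hη).ne', div_self (sinh_sub_self_ne_zero hη),
    one_smul]

theorem contDiff_one_of_hasDerivAt_comp {E : Type*} [NormedAddCommGroup E] [NormedSpace ℝ E]
    {F : E → E} {u : ℝ → E} (hF : Continuous F) (hu : ∀ t, HasDerivAt u (F (u t)) t) :
    ContDiff ℝ 1 u := by
  have hdiff : Differentiable ℝ u := fun t => (hu t).differentiableAt
  rw [contDiff_one_iff_deriv, funext fun t => (hu t).deriv]
  exact ⟨hdiff, hF.comp hdiff.continuous⟩

theorem friedmannOrbit_ne_SM2 {η : ℝ} (hη : η ≠ 0) : friedmannOrbit η ≠ (4 / 3, 2 / 3) := by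
  have hC := cosh_sub_one_pos hη
  have hsq := sinh_sq η
  simp only [friedmannOrbit, ne_eq, Prod.mk.injEq, not_and]
  intro hZ hW
  rw [div_eq_iff (by positivity)] at hZ hW
  -- `hZ` and the square of `hW` force `sinh² η = 2 (cosh η - 1)`, whereas
  -- `sinh² η = (cosh η - 1)² + 2 (cosh η - 1)`.
  have : (cosh η - 1) ^ 5 = 0 := by
    linear_combination -(3 / 4) * sinh η ^ 2 * hZ
      + 9 / 2 * ((sinh η - η) * sinh η + 2 / 3 * (cosh η - 1) ^ 2) * hW - (cosh η - 1) ^ 3 * hsq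
  exact (pow_pos hC 5).ne' this

theorem friedmannOrbit_ne_M2 {η : ℝ} (hη : η ≠ 0) : friedmannOrbit η ≠ (0, 1) := by
  have hP := sinh_sub_self_ne_zero hη
  have hC := cosh_sub_one_pos hη
  simp only [friedmannOrbit, ne_eq, Prod.mk.injEq, not_and]
  intro hZ
  exact absurd hZ (by positivity)

/-- Existence of a heteroclinic orbit of the order `n = 1` STV ODE connecting the
critical Friedmann rest point `SM₂ = (4/3, 2/3)` to the Minkowski rest point
`M₂ = (0, 1)`. -/
theorem exists_heteroclinic_SM2_to_M2 :
    ∃ u : ℝ → ℝ × ℝ,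
      ContDiff ℝ 1 u ∧
      (∀ τ : ℝ, HasDerivAt u (F1 (u τ)) τ) ∧
      Tendsto u atBot (nhds ((4 / 3 : ℝ), (2 / 3 : ℝ))) ∧
      Tendsto u atTop (nhds ((0 : ℝ), (1 : ℝ))) ∧
      ∀ τ : ℝ, u τ ≠ (4 / 3, 2 / 3) ∧ u τ ≠ (0, 1) := by
  have hη (τ : ℝ) : developmentAngle τ ≠ 0 := (developmentAngle_pos τ).ne'
  refine ⟨friedmannOrbit ∘ developmentAngle,
    contDiff_one_of_hasDerivAt_comp (by unfold F1; fun_prop)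
      hasDerivAt_friedmannOrbit_comp_developmentAngle,
    hasDerivAt_friedmannOrbit_comp_developmentAngle,
    tendsto_friedmannOrbit_nhdsGT_zero.comp tendsto_developmentAngle_atBot,
    tendsto_friedmannOrbit_atTop.comp tendsto_developmentAngle_atTop,
    fun τ => ⟨friedmannOrbit_ne_SM2 (hη τ), friedmannOrbit_ne_M2 (hη τ)⟩⟩
end

section
/- Let u = (z₂, w₀) : [τ₀, ∞) → ℝ² be continuously differentiable with u′(τ) = F₁(u(τ)) for all τ ≥ τ₀, and suppose u(τ) → (0, 1) as τ → ∞. Then there exist constants C > 0 and τ₁ ≥ τ₀ such that for all τ ≥ τ₁: |z₂(τ)| ≤ C·e^{−τ} and |w₀(τ) − 1| ≤ C·(1 + τ)·e^{−τ}. (In the original time t̄ = e^τ these are the decay rates z₂ = O(t̄^{−1}) and w₀ − 1 = O(t̄^{−1} ln t̄) of Theorem 7, reflecting the degenerate stable rest point structure at M₂.) -/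
/-!
Write `v = w₀ - 1`, so that `z₂' = -z₂ (1 + 3v)` and `v' = -z₂/6 - v - v²`. Once `|v| ≤ 1/9`, the
energy `z₂² + v²` decays at least like `e^{-τ}`, so `|v| = O(e^{-τ/2})` is integrable and Grönwall
turns `(e^{2τ} z₂²)' = -6v · e^{2τ} z₂²` into `z₂ = O(e^{-τ})`. Then `(e^τ v)' = -e^τ z₂ / 6 - e^τ v²`
is bounded, so `e^τ v` grows at most linearly; the linear growth is the logarithm in
`w₀ - 1 = O(t̄⁻¹ ln t̄)`, caused by the Jordan block of the linearization.
-/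

open Real Set Filter

theorem antitoneOn_mul_exp_neg_of_hasDerivAt_le_mul {a : ℝ} {y y' G g : ℝ → ℝ}
    (hy : ∀ τ ∈ Ici a, HasDerivAt y (y' τ) τ) (hG : ∀ τ ∈ Ici a, HasDerivAt G (g τ) τ)
    (h : ∀ τ ∈ Ici a, y' τ ≤ g τ * y τ) :
    AntitoneOn (fun τ => y τ * exp (-G τ)) (Ici a) := by
  have hderiv : ∀ τ ∈ Ici a, HasDerivAt (fun τ => y τ * exp (-G τ))
      (exp (-G τ) * (y' τ - g τ * y τ)) τ := fun τ hτ =>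
    ((hy τ hτ).mul (hG τ hτ).neg.exp).congr_deriv (by rw [Pi.neg_apply]; ring)
  refine antitoneOn_of_hasDerivWithinAt_nonpos (convex_Ici a)
    (fun τ hτ => (hderiv τ hτ).continuousAt.continuousWithinAt)
    (fun τ hτ => (hderiv τ (interior_subset hτ)).hasDerivWithinAt) fun τ hτ => ?_
  exact mul_nonpos_of_nonneg_of_nonpos (exp_pos _).le (sub_nonpos.2 (h τ (interior_subset hτ)))

theorem abs_le_sqrt_mul_exp_half_of_sq_le {x B s : ℝ} (h : x ^ 2 ≤ B * exp s) :
    |x| ≤ √B * exp (s / 2) :=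
  calc |x| ≤ √(B * exp s) := abs_le_sqrt h
    _ = √B * exp (s / 2) := by rw [sqrt_mul' _ (exp_pos s).le, exp_half]

namespace STV

-- `|v| ≤ 1/9` keeps `1 + 3v ≥ 2/3`, which is what makes the energy decay at the full rate `1`.
theorem sq_add_sq_le_mul_exp_neg {a : ℝ} {z v : ℝ → ℝ}
    (hz : ∀ τ ∈ Ici a, HasDerivAt z (-(z τ * (1 + 3 * v τ))) τ)
    (hv : ∀ τ ∈ Ici a, HasDerivAt v (-(1 / 6) * z τ - v τ - v τ ^ 2) τ)
    (hsmall : ∀ τ ∈ Ici a, |v τ| ≤ 1 / 9) :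
    ∃ K, ∀ τ ∈ Ici a, z τ ^ 2 + v τ ^ 2 ≤ K * exp (-τ) := by
  have hE : ∀ τ ∈ Ici a, HasDerivAt (fun t => z t ^ 2 + v t ^ 2)
      (2 * z τ * -(z τ * (1 + 3 * v τ)) + 2 * v τ * (-(1 / 6) * z τ - v τ - v τ ^ 2)) τ :=
    fun τ hτ => (((hz τ hτ).pow 2).add ((hv τ hτ).pow 2)).congr_deriv (by push_cast; ring)
  have hdecay : ∀ τ ∈ Ici a, 2 * z τ * -(z τ * (1 + 3 * v τ)) +
      2 * v τ * (-(1 / 6) * z τ - v τ - v τ ^ 2) ≤ -1 * (z τ ^ 2 + v τ ^ 2) := by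
    intro τ hτ
    obtain ⟨hlo, hhi⟩ := abs_le.1 (hsmall τ hτ)
    nlinarith [mul_nonneg (sq_nonneg (z τ)) (by linarith : (0 : ℝ) ≤ v τ + 1 / 9),
      mul_nonneg (sq_nonneg (v τ)) (by linarith : (0 : ℝ) ≤ v τ + 1 / 9),
      sq_nonneg (z τ + v τ / 2)]
  have hanti := antitoneOn_mul_exp_neg_of_hasDerivAt_le_mul (G := fun τ => -τ) hE
    (fun τ _ => hasDerivAt_neg' τ) hdecay
  refine ⟨(z a ^ 2 + v a ^ 2) * exp a, fun τ hτ => ?_⟩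
  have h := hanti self_mem_Ici hτ hτ
  simp only [neg_neg] at h
  calc z τ ^ 2 + v τ ^ 2 = (z τ ^ 2 + v τ ^ 2) * exp τ * exp (-τ) := by
        rw [mul_assoc, ← exp_add, add_neg_cancel, exp_zero, mul_one]
    _ ≤ (z a ^ 2 + v a ^ 2) * exp a * exp (-τ) := mul_le_mul_of_nonneg_right h (exp_pos _).le

theorem abs_le_mul_exp_neg_of_sq_le {a K : ℝ} {z v : ℝ → ℝ}
    (hz : ∀ τ ∈ Ici a, HasDerivAt z (-(z τ * (1 + 3 * v τ))) τ)
    (hv_le : ∀ τ ∈ Ici a, v τ ^ 2 ≤ K * exp (-τ)) :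
    ∃ C, ∀ τ ∈ Ici a, |z τ| ≤ C * exp (-τ) := by
  have hvL (τ) (hτ : τ ∈ Ici a) : |v τ| ≤ √K * exp (-τ / 2) :=
    abs_le_sqrt_mul_exp_half_of_sq_le (hv_le τ hτ)
  set y := fun τ => exp (2 * τ) * z τ ^ 2
  have hy : ∀ τ ∈ Ici a, HasDerivAt y (-6 * v τ * y τ) τ := fun τ hτ =>
    ((((hasDerivAt_id' τ).const_mul 2).exp).mul ((hz τ hτ).pow 2)).congr_deriv
      (by simp only [y, Pi.pow_apply]; push_cast; ring)
  -- `G` is a primitive of the integrable bound `6 √K e^{-τ/2}` on `-6v`.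
  set G := fun τ => -(12 * √K) * exp (-τ / 2)
  have hG : ∀ τ ∈ Ici a, HasDerivAt G (6 * √K * exp (-τ / 2)) τ := fun τ _ =>
    ((((hasDerivAt_neg' τ).div_const 2).exp).const_mul _).congr_deriv (by ring)
  have hgron : ∀ τ ∈ Ici a, -6 * v τ * y τ ≤ 6 * √K * exp (-τ / 2) * y τ := fun τ hτ =>
    mul_le_mul_of_nonneg_right (by linarith [neg_abs_le (v τ), hvL τ hτ]) (by positivity)
  have hanti := antitoneOn_mul_exp_neg_of_hasDerivAt_le_mul hy hG hgron
  refine ⟨√(y a * exp (-G a)), fun τ hτ => ?_⟩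
  have hyτ : y τ ≤ y τ * exp (-G τ) :=
    le_mul_of_one_le_right (by positivity)
      (one_le_exp (by simp only [G, neg_mul, neg_neg]; positivity))
  have hz2 : z τ ^ 2 ≤ y a * exp (-G a) * exp (-(2 * τ)) := by
    calc z τ ^ 2 = y τ * exp (-(2 * τ)) := by
          simp only [y]; rw [mul_comm (exp _), mul_assoc, ← exp_add, add_neg_cancel, exp_zero,
            mul_one]
      _ ≤ y a * exp (-G a) * exp (-(2 * τ)) := by
          gcongr; exact hyτ.trans (hanti self_mem_Ici hτ hτ)
  simpa [neg_div] using abs_le_sqrt_mul_exp_half_of_sq_le hz2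

theorem abs_le_mul_one_add_mul_exp_neg {a C K : ℝ} {z v : ℝ → ℝ} (ha : 0 ≤ a)
    (hv : ∀ τ ∈ Ici a, HasDerivAt v (-(1 / 6) * z τ - v τ - v τ ^ 2) τ)
    (hz_le : ∀ τ ∈ Ici a, |z τ| ≤ C * exp (-τ)) (hv_le : ∀ τ ∈ Ici a, v τ ^ 2 ≤ K * exp (-τ)) :
    ∃ D, ∀ τ ∈ Ici a, |v τ| ≤ D * (1 + τ) * exp (-τ) := by
  set f := fun τ => exp τ * v τ
  have hf : ∀ τ ∈ Ici a, HasDerivAt f (exp τ * (-(1 / 6) * z τ - v τ ^ 2)) τ := fun τ hτ =>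
    ((hasDerivAt_exp τ).mul (hv τ hτ)).congr_deriv (by ring)
  have hf'_le : ∀ τ ∈ Ici a, ‖exp τ * (-(1 / 6) * z τ - v τ ^ 2)‖ ≤ C / 6 + K := by
    intro τ hτ
    have hcancel : exp τ * exp (-τ) = 1 := by rw [← exp_add, add_neg_cancel, exp_zero]
    calc ‖exp τ * (-(1 / 6) * z τ - v τ ^ 2)‖ ≤ exp τ * (|z τ| / 6 + v τ ^ 2) := by
          rw [norm_mul, norm_of_nonneg (exp_pos τ).le, norm_eq_abs]
          gcongr
          calc |-(1 / 6) * z τ - v τ ^ 2| ≤ |-(1 / 6) * z τ| + |v τ ^ 2| := abs_sub _ _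
            _ = |z τ| / 6 + v τ ^ 2 := by
                rw [abs_mul, abs_of_nonneg (sq_nonneg (v τ))]; norm_num; ring
      _ ≤ exp τ * (C * exp (-τ) / 6 + K * exp (-τ)) := by
          gcongr
          · exact hz_le τ hτ
          · exact hv_le τ hτ
      _ = C / 6 + K := by linear_combination (C / 6 + K) * hcancel
  refine ⟨|f a| + |C / 6 + K|, fun τ hτ => ?_⟩
  have hτ' : a ≤ τ := hτ
  have hmvt := norm_image_sub_le_of_norm_deriv_le_segment'
    (fun t ht => (hf t ht.1).hasDerivWithinAt) (fun t ht => hf'_le t ht.1) τ ⟨hτ', le_rfl⟩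
  rw [norm_eq_abs] at hmvt
  have hf_le : |f τ| ≤ (|f a| + |C / 6 + K|) * (1 + τ) := by
    have := abs_sub_abs_le_abs_sub (f τ) (f a)
    nlinarith [le_abs_self (C / 6 + K), abs_nonneg (f a), abs_nonneg (C / 6 + K)]
  calc |v τ| = |f τ| * exp (-τ) := by
        simp only [f]; rw [abs_mul, abs_of_pos (exp_pos τ), mul_comm (exp τ), mul_assoc,
          ← exp_add, add_neg_cancel, exp_zero, mul_one]
    _ ≤ (|f a| + |C / 6 + K|) * (1 + τ) * exp (-τ) := by gcongr

end STV

/-- Decay rates at the degenerate stable rest point `M₂ = (0,1)` of the order `n = 1`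
STV ODE: solutions converging to `M₂` satisfy `z₂ = O(e^{−τ})` and
`w₀ − 1 = O((1+τ) e^{−τ})`. -/
theorem decay_rates_at_M2 (τ₀ : ℝ) (z₂ w₀ : ℝ → ℝ)
    (hz : ∀ τ ∈ Ici τ₀, HasDerivAt z₂ (2 * z₂ τ - 3 * z₂ τ * w₀ τ) τ)
    (hw : ∀ τ ∈ Ici τ₀, HasDerivAt w₀ (-(1 / 6) * z₂ τ + w₀ τ - (w₀ τ) ^ 2) τ)
    (hlim : Tendsto (fun τ => (z₂ τ, w₀ τ)) atTop (nhds ((0 : ℝ), (1 : ℝ)))) :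
    ∃ C > (0 : ℝ), ∃ τ₁ ≥ τ₀, ∀ τ ≥ τ₁,
      |z₂ τ| ≤ C * Real.exp (-τ) ∧
      |w₀ τ - 1| ≤ C * (1 + τ) * Real.exp (-τ) := by
  set v := fun τ => w₀ τ - 1
  have hv_lim : Tendsto v atTop (nhds 0) := by
    simpa using ((continuous_snd.tendsto _).comp hlim).sub_const 1
  obtain ⟨a, ha⟩ := eventually_atTop.1 <|
    (hv_lim.abs.eventually (ge_mem_nhds (by norm_num : |(0 : ℝ)| < 1 / 9))).and
      (eventually_ge_atTop (max τ₀ 0))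
  have ha_ge : max τ₀ 0 ≤ a := (ha a le_rfl).2
  have hsub : Ici a ⊆ Ici τ₀ := Ici_subset_Ici.2 ((le_max_left _ _).trans ha_ge)
  have hz' : ∀ τ ∈ Ici a, HasDerivAt z₂ (-(z₂ τ * (1 + 3 * v τ))) τ := fun τ hτ =>
    (hz τ (hsub hτ)).congr_deriv (by ring)
  have hv' : ∀ τ ∈ Ici a, HasDerivAt v (-(1 / 6) * z₂ τ - v τ - v τ ^ 2) τ := fun τ hτ =>
    ((hw τ (hsub hτ)).sub_const 1).congr_deriv (by ring)
  obtain ⟨K, hK⟩ := STV.sq_add_sq_le_mul_exp_neg hz' hv' fun τ hτ => (ha τ hτ).1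
  have hv_sq : ∀ τ ∈ Ici a, v τ ^ 2 ≤ K * exp (-τ) := fun τ hτ =>
    (le_add_of_nonneg_left (sq_nonneg _)).trans (hK τ hτ)
  obtain ⟨Cz, hCz⟩ := STV.abs_le_mul_exp_neg_of_sq_le hz' hv_sq
  obtain ⟨Cv, hCv⟩ :=
    STV.abs_le_mul_one_add_mul_exp_neg ((le_max_right _ _).trans ha_ge) hv' hCz hv_sq
  refine ⟨max (max Cz Cv) 1, by positivity, a, (le_max_left _ _).trans ha_ge, fun τ hτ => ?_⟩
  have hτ0 : 0 ≤ τ := (le_max_right _ _).trans (ha_ge.trans hτ)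
  constructor
  · calc |z₂ τ| ≤ Cz * exp (-τ) := hCz τ hτ
      _ ≤ max (max Cz Cv) 1 * exp (-τ) := by
          gcongr; exact (le_max_left _ _).trans (le_max_left _ _)
  · calc |w₀ τ - 1| ≤ Cv * (1 + τ) * exp (-τ) := hCv τ hτ
      _ ≤ max (max Cz Cv) 1 * (1 + τ) * exp (-τ) := by
          gcongr; exact (le_max_right _ _).trans (le_max_left _ _)
end
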